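/- arXiv:1802.07639 — 2 statements merged into one kernel-verified Lean document; each statement's English description precedes it below -/
import Mathlib

section
/- Let V be a real vector space of dimension 4, α a nonzero linear functional on V, and ω a skew-symmetric bilinear form on V such that α ∧ ω ≠ 0 (i.e., the wedge of α with ω is a nonzero element of Λ³V*). Then the restriction of ω to the 3-dimensional subspace ker α has exactly a 1-dimensional kernel. -/
/-!
The restriction of `ω` to the 3-dimensional hyperplane `ker α` is alternating. An alternating form
on an odd-dimensional space is degenerate (its Gram matrix is skew of odd size, so has determinant
zero), and its radical never has codimension one. So the radical is either a line or all of
`ker α`; in the latter case `ω x y = α x * ω e y - α y * ω e x` for any `e` with `α e = 1`, which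
forces `α ∧ ω = 0`.
-/

open Module Matrix LinearMap

theorem Matrix.det_eq_zero_of_transpose_eq_neg {n R : Type*} [Fintype n] [DecidableEq n]
    [CommRing R] [IsAddTorsionFree R] {A : Matrix n n R} (hA : Aᵀ = -A)
    (hodd : Odd (Fintype.card n)) : A.det = 0 :=
  self_eq_neg.mp <| calc
    A.det = Aᵀ.det := (det_transpose A).symm
    _ = -A.det := by rw [hA, det_neg, hodd.neg_one_pow, neg_one_mul]

namespace LinearMap.IsAlt

variable {K W : Type*} [Field K] [AddCommGroup W] [Module K W]

theorem ker_ne_bot_of_odd_finrank [IsAddTorsionFree K] [FiniteDimensional K W]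
    {B : W →ₗ[K] W →ₗ[K] K} (hB : B.IsAlt) (hodd : Odd (finrank K W)) : ker B ≠ ⊥ := by
  classical
  let b := Module.finBasis K W
  have hskew : (toMatrix₂ b b B)ᵀ = -toMatrix₂ b b B := by
    ext i j
    rw [transpose_apply, Matrix.neg_apply, toMatrix₂_apply, toMatrix₂_apply, hB.neg]
  have hdet := Matrix.det_eq_zero_of_transpose_eq_neg hskew (by simpa using hodd)
  exact fun hker =>
    (separatingLeft_iff_det_ne_zero b).mp (separatingLeft_iff_ker_eq_bot.mpr hker) hdet

-- If `x ∉ ker B` then `ker B ⊔ K ∙ x = ⊤`, and `B x` kills both summands.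
theorem ker_eq_top_of_finrank_le_succ {N : Type*} [AddCommGroup N] [Module K N]
    [FiniteDimensional K W] {B : W →ₗ[K] W →ₗ[K] N} (hB : B.IsAlt)
    (hcodim : finrank K W ≤ finrank K (ker B) + 1) : ker B = ⊤ := by
  by_contra hne
  obtain ⟨x, -, hx⟩ := SetLike.exists_of_lt (lt_top_iff_ne_top.mpr hne)
  have hlt : ker B < ker B ⊔ K ∙ x :=
    left_lt_sup.mpr ((Submodule.span_singleton_le_iff_mem _ _).not.mpr hx)
  have hsup : ker B ⊔ K ∙ x = ⊤ :=
    Submodule.eq_top_of_finrank_eq <|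
      le_antisymm (Submodule.finrank_le _) (hcodim.trans (Submodule.finrank_lt_finrank_of_lt hlt))
  refine hx (LinearMap.ext fun z => ?_)
  obtain ⟨k, hk, y, hy, rfl⟩ := Submodule.mem_sup.mp (hsup ▸ Submodule.mem_top (x := z))
  obtain ⟨t, rfl⟩ := Submodule.mem_span_singleton.mp hy
  rw [map_add, map_smul, hB.self_eq_zero, smul_zero, add_zero, ← hB.neg, LinearMap.mem_ker.mp hk,
    LinearMap.zero_apply, neg_zero, LinearMap.zero_apply]

theorem wedge_eq_zero_of_compl₁₂_ker_eq_zero {α : W →ₗ[K] K} {ω : W →ₗ[K] W →ₗ[K] K}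
    (hω : ω.IsAlt) (hvanish : ω.compl₁₂ (ker α).subtype (ker α).subtype = 0) (u v w : W) :
    α u * ω v w - α v * ω u w + α w * ω u v = 0 := by
  rcases eq_or_ne α 0 with rfl | hα
  · simp
  obtain ⟨e, he⟩ := α.surjective_of_ne_zero hα 1
  have hproj (x : W) : x - α x • e ∈ ker α := by simp [he]
  -- Project `x` and `y` along `e` onto `ker α`, where `ω` vanishes.
  have hsplit (x y : W) : ω x y = α x * ω e y - α y * ω e x := by
    have h := LinearMap.congr_fun₂ hvanish ⟨_, hproj x⟩ ⟨_, hproj y⟩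
    simp only [compl₁₂_apply, Submodule.subtype_apply, map_sub, map_smul, sub_apply, smul_apply,
      smul_eq_mul, hω.self_eq_zero, zero_apply] at h
    linear_combination h - α y * hω.neg x e
  rw [hsplit v w, hsplit u w, hsplit u v]
  ring

end LinearMap.IsAlt

theorem Submodule.finrank_inf_ker_lcomp_comp {K V : Type*} [Field K] [AddCommGroup V] [Module K V]
    (H : Submodule K V) (ω : V →ₗ[K] V →ₗ[K] K) :
    finrank K ↥(H ⊓ ker ((H.subtype.lcomp K K).comp ω)) =
      finrank K (ker (ω.compl₁₂ H.subtype H.subtype)) := by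
  rw [← map_comap_subtype, ← ker_comp, finrank_map_subtype_eq]
  rfl

theorem isotropic_line_of_even_contact_general
    (V : Type*) [AddCommGroup V] [Module ℝ V]
    (hdim : Module.finrank ℝ V = 4)
    (α : V →ₗ[ℝ] ℝ) (hα : α ≠ 0)
    (ω : V →ₗ[ℝ] V →ₗ[ℝ] ℝ)
    (hskew : ∀ u v : V, ω u v = - ω v u)
    (hwedge : ∃ u v w : V, α u * ω v w - α v * ω u w + α w * ω u v ≠ 0) :
    Module.finrank ℝ
      ↥(LinearMap.ker α ⊓
        LinearMap.ker (((LinearMap.ker α).subtype.lcomp ℝ ℝ).comp ω)) = 1 := by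
  have : FiniteDimensional ℝ V := Module.finite_of_finrank_eq_succ hdim
  have hH : finrank ℝ (ker α) = 3 := by
    have := Module.Dual.finrank_ker_add_one_of_ne_zero hα
    omega
  have hω : ω.IsAlt := fun x => by linarith [hskew x x]
  rw [Submodule.finrank_inf_ker_lcomp_comp]
  set B := ω.compl₁₂ (ker α).subtype (ker α).subtype
  have hB : B.IsAlt := fun x => hω x
  have hpos : 1 ≤ finrank ℝ (ker B) :=
    Submodule.one_le_finrank_iff.mpr (hB.ker_ne_bot_of_odd_finrank (by rw [hH]; decide))
  have hle : finrank ℝ (ker B) ≤ 1 := by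
    by_contra! hgt
    obtain ⟨u, v, w, hne⟩ := hwedge
    have hB0 : B = 0 := ker_eq_top.mp (hB.ker_eq_top_of_finrank_le_succ (by omega))
    exact hne (hω.wedge_eq_zero_of_compl₁₂_ker_eq_zero hB0 u v w)
  omega

/-- if `V` is a 4-dimensional real vector space, `α` a nonzero linear functional,
and `ω` a skew-symmetric bilinear form with `α ∧ ω ≠ 0` (as an element of `Λ³V*`), then the
kernel of the restriction of `ω` to the hyperplane `ker α` is exactly 1-dimensional. -/
theorem isotropic_line_of_even_contact
    (V : Type*) [AddCommGroup V] [Module ℝ V] [FiniteDimensional ℝ V]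
    (hdim : Module.finrank ℝ V = 4)
    (α : V →ₗ[ℝ] ℝ) (hα : α ≠ 0)
    (ω : V →ₗ[ℝ] V →ₗ[ℝ] ℝ)
    (hskew : ∀ u v : V, ω u v = - ω v u)
    (hwedge : ∃ u v w : V, α u * ω v w - α v * ω u w + α w * ω u v ≠ 0) :
    Module.finrank ℝ
      ↥(LinearMap.ker α ⊓
        LinearMap.ker (((LinearMap.ker α).subtype.lcomp ℝ ℝ).comp ω)) = 1 :=
  isotropic_line_of_even_contact_general V hdim α hα ω hskew hwedge
end

section
/- Let ξ be a smooth plane field on a 3-manifold Y, and let ℰ = ξ ⊕ ℝ·(∂_φ + L) be the hyperplane field on Y × [0,1] obtained from ξ and a vector field L on Y (lifted to the product, with φ the coordinate on [0,1]). If ξ = ker β for a contact form β on Y and L is a contact vector field for ξ (L_L β = f·β), then the 1-form α = β (pulled back to Y × [0,1]) − β(L) dφ satisfies ker α = ℰ and α ∧ dα ≠ 0 everywhere; i.e., ℰ is an even contact structure, and its isotropic foliation is spanned by ∂_φ + L. -/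
noncomputable section

/-- The model 3-manifold (a chart of `Y`). -/
abbrev E3 := EuclideanSpace ℝ (Fin 3)

/-- The Lie derivative of a 1-form `β` along a vector field `L`, via Cartan's formula. -/
def lieDeriv (β : E3 → E3 →L[ℝ] ℝ) (L : E3 → E3) (p : E3) (v : E3) : ℝ :=
  fderiv ℝ β p (L p) v + β p (fderiv ℝ L p v)

/-- The exterior derivative of a 1-form on `E3`. -/
def extDeriv3 (β : E3 → E3 →L[ℝ] ℝ) (p : E3) (u v : E3) : ℝ :=
  fderiv ℝ β p u v - fderiv ℝ β p v u

/-- The 1-form `α = β − β(L) dφ` on the product `Y × [0,1]` (with `φ` the coordinate on the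
second factor), whose kernel is `ℰ = ξ ⊕ ℝ(∂_φ + L)`. -/
def prodForm (β : E3 → E3 →L[ℝ] ℝ) (L : E3 → E3) :
    E3 × ℝ → (E3 × ℝ) →L[ℝ] ℝ :=
  fun q => (β q.1).comp (ContinuousLinearMap.fst ℝ E3 ℝ) -
    (β q.1 (L q.1)) • (ContinuousLinearMap.snd ℝ E3 ℝ)

/-- The exterior derivative of a 1-form on the product `E3 × ℝ`. -/
def extDeriv4 (α : E3 × ℝ → (E3 × ℝ) →L[ℝ] ℝ) (q : E3 × ℝ) (u v : E3 × ℝ) : ℝ :=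
  fderiv ℝ α q u v - fderiv ℝ α q v u
/-!
The form `α = β − β(L) dφ` has `dα = dβ − d(β(L)) ∧ dφ`. On vectors tangent to `Y` the pair
`(α, dα)` restricts to `(β, dβ)`, so `α ∧ dα` is nonzero wherever `β ∧ dβ` is. Contracting with
`∂_φ + L` and using Cartan's formula `L_L β = ι_L dβ + d(β(L))` gives
`ι_{∂_φ + L} dα = L_L β − (L_L β)(L) dφ`, which is `f·α` when `L_L β = f·β`; hence `∂_φ + L`
lies in `ker α` and is `dα`-orthogonal to it.
-/

section

variable {β : E3 → E3 →L[ℝ] ℝ} {L : E3 → E3}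

lemma prodForm_apply (q z : E3 × ℝ) :
    prodForm β L q z = β q.1 z.1 - β q.1 (L q.1) * z.2 := by
  simp [prodForm]

lemma prodForm_apply_mk (q : E3 × ℝ) (v : E3) (s : ℝ) :
    prodForm β L q (v, s) = β q.1 (v - s • L q.1) := by
  rw [prodForm_apply, map_sub, map_smul, smul_eq_mul, mul_comm]

lemma fderiv_apply_self_eq_lieDeriv_sub {p : E3} (hβ : DifferentiableAt ℝ β p)
    (hL : DifferentiableAt ℝ L p) (v : E3) :
    fderiv ℝ (fun p => β p (L p)) p v = lieDeriv β L p v - extDeriv3 β p (L p) v := by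
  rw [fderiv_clm_apply hβ hL, lieDeriv, extDeriv3]
  simp

lemma fderiv_prodForm_apply {q : E3 × ℝ} (hβ : DifferentiableAt ℝ β q.1)
    (hL : DifferentiableAt ℝ L q.1) (w z : E3 × ℝ) :
    fderiv ℝ (prodForm β L) q w z
      = fderiv ℝ β q.1 w.1 z.1 - fderiv ℝ (fun p => β p (L p)) q.1 w.1 * z.2 := by
  have hβ₁ : HasFDerivAt (fun q : E3 × ℝ => β q.1)
      ((fderiv ℝ β q.1).comp (ContinuousLinearMap.fst ℝ E3 ℝ)) q :=
    hβ.hasFDerivAt.comp q hasFDerivAt_fst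
  have hβL₁ : HasFDerivAt (fun q : E3 × ℝ => β q.1 (L q.1))
      ((fderiv ℝ (fun p => β p (L p)) q.1).comp (ContinuousLinearMap.fst ℝ E3 ℝ)) q :=
    (hβ.clm_apply hL).hasFDerivAt.comp q hasFDerivAt_fst
  have hα : HasFDerivAt (prodForm β L) _ q :=
    (hβ₁.clm_comp (hasFDerivAt_const (ContinuousLinearMap.fst ℝ E3 ℝ) q)).sub
      (hβL₁.smul_const (ContinuousLinearMap.snd ℝ E3 ℝ))
  rw [hα.fderiv]
  simp

lemma extDeriv4_prodForm {q : E3 × ℝ} (hβ : DifferentiableAt ℝ β q.1)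
    (hL : DifferentiableAt ℝ L q.1) (u v : E3 × ℝ) :
    extDeriv4 (prodForm β L) q u v
      = extDeriv3 β q.1 u.1 v.1
        - fderiv ℝ (fun p => β p (L p)) q.1 u.1 * v.2
        + fderiv ℝ (fun p => β p (L p)) q.1 v.1 * u.2 := by
  rw [extDeriv4, extDeriv3, fderiv_prodForm_apply hβ hL, fderiv_prodForm_apply hβ hL]
  ring

lemma extDeriv4_prodForm_mk_zero {q : E3 × ℝ} (hβ : DifferentiableAt ℝ β q.1)
    (hL : DifferentiableAt ℝ L q.1) (u v : E3) :
    extDeriv4 (prodForm β L) q (u, 0) (v, 0) = extDeriv3 β q.1 u v := by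
  rw [extDeriv4_prodForm hβ hL, mul_zero, mul_zero, sub_zero, add_zero]

lemma extDeriv4_prodForm_lift {q : E3 × ℝ} (hβ : DifferentiableAt ℝ β q.1)
    (hL : DifferentiableAt ℝ L q.1) (u : E3 × ℝ) :
    extDeriv4 (prodForm β L) q (L q.1, 1) u
      = lieDeriv β L q.1 u.1 - u.2 * lieDeriv β L q.1 (L q.1) := by
  have hdβ_self : extDeriv3 β q.1 (L q.1) (L q.1) = 0 := sub_self _
  rw [extDeriv4_prodForm hβ hL, fderiv_apply_self_eq_lieDeriv_sub hβ hL,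
    fderiv_apply_self_eq_lieDeriv_sub hβ hL, hdβ_self]
  ring

lemma extDeriv4_prodForm_lift_eq_mul {f : E3 → ℝ} (hLf : ∀ p v, lieDeriv β L p v = f p * β p v)
    {q : E3 × ℝ} (hβ : DifferentiableAt ℝ β q.1) (hL : DifferentiableAt ℝ L q.1) (u : E3 × ℝ) :
    extDeriv4 (prodForm β L) q (L q.1, 1) u = f q.1 * prodForm β L q u := by
  rw [extDeriv4_prodForm_lift hβ hL, hLf, hLf, prodForm_apply]
  ring

end

/-- if `ξ = ker β` for a contact form `β` on the 3-manifold `Y` and `L` is a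
contact vector field for `ξ` (`L_L β = f·β`), then the 1-form `α = β − β(L) dφ` on
`Y × [0,1]` satisfies `ker α = ℰ := ξ ⊕ ℝ(∂_φ + L)` and `α ∧ dα ≠ 0` everywhere; i.e. `ℰ`
is an even contact structure, and its isotropic foliation is spanned by `∂_φ + L`. -/
theorem product_even_contact_structure
    (β : E3 → E3 →L[ℝ] ℝ) (hβ : Differentiable ℝ β)
    (hcontact : ∀ p : E3, ∃ u v w : E3,
      β p u * extDeriv3 β p v w - β p v * extDeriv3 β p u w
        + β p w * extDeriv3 β p u v ≠ 0)
    (L : E3 → E3) (hL : Differentiable ℝ L)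
    (f : E3 → ℝ) (hLf : ∀ p v, lieDeriv β L p v = f p * β p v) :
    -- `ker α = ξ ⊕ ℝ(∂_φ + L)`: a vector `(v, s)` lies in `ker α` iff its
    -- `ξ`-component `v − s·L` lies in `ξ = ker β`
    (∀ (q : E3 × ℝ) (v : E3) (s : ℝ),
      prodForm β L q (v, s) = 0 ↔ β q.1 (v - s • L q.1) = 0) ∧
    -- `α ∧ dα ≠ 0` everywhere: `ℰ` is an even contact structure
    (∀ q : E3 × ℝ, ∃ a b c : E3 × ℝ,
      prodForm β L q a * extDeriv4 (prodForm β L) q b c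
        - prodForm β L q b * extDeriv4 (prodForm β L) q a c
        + prodForm β L q c * extDeriv4 (prodForm β L) q a b ≠ 0) ∧
    -- the isotropic foliation is spanned by `∂_φ + L`
    (∀ q : E3 × ℝ,
      prodForm β L q (L q.1, 1) = 0 ∧
      ∀ u : E3 × ℝ, prodForm β L q u = 0 →
        extDeriv4 (prodForm β L) q (L q.1, 1) u = 0) := by
  refine ⟨fun q v s => by rw [prodForm_apply_mk], fun q => ?_, fun q => ⟨?_, fun u hu => ?_⟩⟩
  · obtain ⟨u, v, w, hβdβ⟩ := hcontact q.1
    refine ⟨(u, 0), (v, 0), (w, 0), ?_⟩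
    simpa only [prodForm_apply_mk, zero_smul, sub_zero,
      extDeriv4_prodForm_mk_zero (hβ q.1) (hL q.1)] using hβdβ
  · rw [prodForm_apply_mk, one_smul, sub_self, map_zero]
  · rw [extDeriv4_prodForm_lift_eq_mul hLf (hβ q.1) (hL q.1), hu, mul_zero]

end
end
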